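/- arXiv:2406.10463 — 5 statements merged into one kernel-verified Lean document; each statement's English description precedes it below -/
import Mathlib

section
/- The relation of being a simple extension on the set of all standard finite trees is transitive. -/
noncomputable section
open scoped Classical

namespace AKST

/-- The first uncountable ordinal. -/
def ω1 : Ordinal := (Cardinal.aleph 1).ord

/-- The second uncountable ordinal. -/
def ω2 : Ordinal := (Cardinal.aleph 2).ord

/-- The height of a countable ordinal `γ`: the unique `α` with `ω·α ≤ γ < ω·(α+1)`. -/
def ht (γ : Ordinal) : Ordinal := γ / Ordinal.omega0

/-- A standard finite tree. -/
structure SFT where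
  elems : Finset Ordinal
  lt : Ordinal → Ordinal → Prop
  zero_mem : 0 ∈ elems
  mem_ok : ∀ x ∈ elems, x = 0 ∨ (Ordinal.omega0 ≤ x ∧ x < ω1)
  lt_mem : ∀ {x y}, lt x y → x ∈ elems ∧ y ∈ elems
  lt_trans' : ∀ {x y z}, lt x y → lt y z → lt x z
  lt_irrefl' : ∀ x, ¬ lt x x
  pred_linear : ∀ {x y z}, lt y x → lt z x → lt y z ∨ y = z ∨ lt z y
  lt_ht : ∀ {x y}, lt x y → ht x < ht y
  pred_level : ∀ x ∈ elems, ∀ α, (∃ z ∈ elems, ht z = α) → α < ht x →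
    ∃ y ∈ elems, ht y = α ∧ lt y x

namespace SFT

/-- The non-strict tree order. -/
def le (T : SFT) (x y : Ordinal) : Prop := T.lt x y ∨ (x = y ∧ x ∈ T.elems)

/-- `ht[T]`: the set of nonzero heights of elements of `T`. -/
def heights (T : SFT) : Set Ordinal := {α | α ≠ 0 ∧ ∃ x ∈ T.elems, ht x = α}

/-- Level `α` of `T`. -/
def level (T : SFT) (α : Ordinal) : Set Ordinal := {x | x ∈ T.elems ∧ ht x = α}

/-- `max(ht[T])`. -/
def maxHeight (T : SFT) : Ordinal := sSup T.heights

/-- The least element of `ht[T]` greater than `α`. -/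
def minAbove (T : SFT) (α : Ordinal) : Ordinal := sInf {β | β ∈ T.heights ∧ α < β}

/-- The drop-down `x↾α`: the unique element of `T` of height `α` below `x`. -/
def drop (T : SFT) (α x : Ordinal) : Ordinal :=
  if h : ∃ y, y ∈ T.elems ∧ ht y = α ∧ T.lt y x then h.choose else 0

/-- `z` is the meet of `x` and `y` in `T`. -/
def isMeet (T : SFT) (x y z : Ordinal) : Prop :=
  T.le z x ∧ T.le z y ∧ ∀ w, T.le w x → T.le w y → T.le w z

/-- The meet `x ∧_T y`. -/
def meet (T : SFT) (x y : Ordinal) : Ordinal :=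
  if h : ∃ z, T.isMeet x y z then h.choose else 0

/-- `U` extends `T`. -/
def Ext (T U : SFT) : Prop :=
  (↑T.elems : Set Ordinal) ⊆ ↑U.elems ∧ ∀ {x y}, T.lt x y → U.lt x y

/-- `X` has unique drop-downs to `α` in `T`. -/
def UniqueDrops (T : SFT) (α : Ordinal) (X : Set Ordinal) : Prop :=
  ∀ x ∈ X, ∀ y ∈ X, T.drop α x = T.drop α y → x = y

/-- `U` is a simple extension of `T`. -/
def SimpleExt (U T : SFT) : Prop :=
  Ext T U ∧
  (∀ x ∈ U.elems, x ∉ T.elems → ht x ∉ T.heights) ∧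
  (∀ α, α ∈ U.heights → α ∉ T.heights → α < T.maxHeight →
     U.UniqueDrops α (T.level (T.minAbove α)))

/-- `x` and `y` are incomparable in `T`. -/
def Incomp (T : SFT) (x y : Ordinal) : Prop := x ≠ y ∧ ¬ T.lt x y ∧ ¬ T.lt y x

/-- `T` is normal: every element has successors at every higher occupied level. -/
def Normal (T : SFT) : Prop :=
  ∀ x ∈ T.elems, ∀ γ ∈ T.heights, ht x < γ → ∃ y ∈ T.elems, ht y = γ ∧ T.lt x y

end SFT

/-! Partial functions on a tree, represented by their graphs. -/

def dom (f : Set (Ordinal × Ordinal)) : Set Ordinal := {x | ∃ y, (x, y) ∈ f}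

def ran (f : Set (Ordinal × Ordinal)) : Set Ordinal := {y | ∃ x, (x, y) ∈ f}

/-- The graph is single-valued. -/
def FuncGraph (f : Set (Ordinal × Ordinal)) : Prop :=
  ∀ {x y y'}, (x, y) ∈ f → (x, y') ∈ f → y = y'

/-- The graph is injective. -/
def InjGraph (f : Set (Ordinal × Ordinal)) : Prop :=
  ∀ {x x' y}, (x, y) ∈ f → (x', y) ∈ f → x = x'

/-- The graph is a partial function from `T` to `T`. -/
def Carr (T : SFT) (f : Set (Ordinal × Ordinal)) : Prop :=
  ∀ p ∈ f, p.1 ∈ T.elems ∧ p.2 ∈ T.elems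

/-- Strictly increasing. -/
def StrictIncr (T : SFT) (f : Set (Ordinal × Ordinal)) : Prop :=
  ∀ {x y x' y'}, (x, y) ∈ f → (x', y') ∈ f → T.lt x x' → T.lt y y'

/-- Level preserving. -/
def LevelPres (f : Set (Ordinal × Ordinal)) : Prop :=
  ∀ p ∈ f, ht p.1 = ht p.2

/-- Downwards closed (the domain is closed under drop-downs). -/
def DownClosedDom (T : SFT) (f : Set (Ordinal × Ordinal)) : Prop :=
  ∀ x y, (x, y) ∈ f → ∀ β ∈ T.heights, β < ht x →
    ∃ x' y', x' ∈ T.elems ∧ ht x' = β ∧ T.lt x' x ∧ (x', y') ∈ f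

/-- No fixed points other than 0. -/
def NoFix (f : Set (Ordinal × Ordinal)) : Prop := ∀ x, (x, x) ∈ f → x = 0

/-- `f` is a standard function on `T`. -/
def IsStdFun (T : SFT) (f : Set (Ordinal × Ordinal)) : Prop :=
  Carr T f ∧ FuncGraph f ∧ InjGraph f ∧ StrictIncr T f ∧ LevelPres f ∧
    DownClosedDom T f ∧ NoFix f

/-- `f^m(x) = y`, for `m ∈ {-1, 1}`. -/
def appPow (f : Set (Ordinal × Ordinal)) (m : ℤ) (x y : Ordinal) : Prop :=
  (m = 1 ∧ (x, y) ∈ f) ∨ (m = -1 ∧ (y, x) ∈ f)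

/-- `X↾α` and `X` are `f`-consistent. -/
def Consistent (T : SFT) (f : Set (Ordinal × Ordinal)) (α : Ordinal) (X : Set Ordinal) : Prop :=
  ∀ x ∈ X, ∀ y ∈ X, ((T.drop α x, T.drop α y) ∈ f ↔ (x, y) ∈ f)

/-- The family `{F τ : τ ∈ A}` is separated on the tuple `a 0, ..., a (n-1)`. -/
def SepOnTuple (F : Ordinal → Set (Ordinal × Ordinal)) (A : Finset Ordinal)
    (n : ℕ) (a : ℕ → Ordinal) : Prop :=
  ∀ i < n, ∀ j₀ < i, ∀ j₁ < i, ∀ m₀ m₁ : ℤ, ∀ τ₀ ∈ A, ∀ τ₁ ∈ A,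
    (m₀ = 1 ∨ m₀ = -1) → (m₁ = 1 ∨ m₁ = -1) →
    appPow (F τ₀) m₀ (a i) (a j₀) → appPow (F τ₁) m₁ (a i) (a j₁) →
    j₀ = j₁ ∧ m₀ = m₁ ∧ τ₀ = τ₁

/-- The family is separated on the set `X`. -/
def SepOnSet (F : Ordinal → Set (Ordinal × Ordinal)) (A : Finset Ordinal)
    (X : Set Ordinal) : Prop :=
  ∃ (n : ℕ) (a : ℕ → Ordinal), (∀ i < n, ∀ j < n, a i = a j → i = j) ∧
    X = a '' {i | i < n} ∧ SepOnTuple F A n a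

/-- The family is `ρ`-separated on the tuple `a 0, ..., a (n-1)` (of elements of level `α`). -/
def RhoSepOnTuple (ρ : Ordinal → Ordinal → Ordinal) (F : Ordinal → Set (Ordinal × Ordinal))
    (A : Finset Ordinal) (α : Ordinal) (n : ℕ) (a : ℕ → Ordinal) : Prop :=
  ∀ i < n, ∀ j₀ < i, ∀ j₁ < i, ∀ m₀ m₁ : ℤ, ∀ τ₀ ∈ A, ∀ τ₁ ∈ A,
    (m₀ = 1 ∨ m₀ = -1) → (m₁ = 1 ∨ m₁ = -1) →
    appPow (F τ₀) m₀ (a i) (a j₀) → appPow (F τ₁) m₁ (a i) (a j₁) →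
    j₀ = j₁ ∧ ((m₀ = m₁ ∧ τ₀ = τ₁) ∨ α ≤ ρ τ₀ τ₁)

/-- The family is `ρ`-separated on the set `X ⊆ T_α`. -/
def RhoSepOnSet (ρ : Ordinal → Ordinal → Ordinal) (F : Ordinal → Set (Ordinal × Ordinal))
    (A : Finset Ordinal) (α : Ordinal) (X : Set Ordinal) : Prop :=
  ∃ (n : ℕ) (a : ℕ → Ordinal), (∀ i < n, ∀ j < n, a i = a j → i = j) ∧
    X = a '' {i | i < n} ∧ RhoSepOnTuple ρ F A α n a

/-- There is a loop in `X` with respect to the family `{F τ : τ ∈ A}`. -/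
def HasLoop (F : Ordinal → Set (Ordinal × Ordinal)) (A : Finset Ordinal)
    (X : Set Ordinal) : Prop :=
  ∃ p : ℕ, 4 ≤ p ∧ ∃ c : ℕ → Ordinal,
    (∀ i < p, c i ∈ X) ∧
    (∀ i < p - 1, ∀ j < p - 1, c i = c j → i = j) ∧
    c 0 = c (p - 1) ∧
    (∀ i < p - 1, ∃ τ ∈ A, ∃ m : ℤ, (m = 1 ∨ m = -1) ∧ appPow (F τ) m (c i) (c (i + 1)))

/-- `p` is a member of `T ⊗ T`. -/
def InOtimes (T : SFT) (p : Ordinal × Ordinal) : Prop :=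
  p.1 ∈ T.elems ∧ p.2 ∈ T.elems ∧ ht p.1 = ht p.2

/-- `f ⊆ T ⊗ T` is downwards closed as a subset of `T ⊗ T`. -/
def DCPairs (T : SFT) (f : Set (Ordinal × Ordinal)) : Prop :=
  ∀ p ∈ f, ∀ q, InOtimes T q → T.le q.1 p.1 → T.le q.2 p.2 → q ∈ f

/-- The downward closure of `f` in `U`. -/
def dcl (U : SFT) (f : Set (Ordinal × Ordinal)) : Set (Ordinal × Ordinal) :=
  {p | InOtimes U p ∧ ∃ q ∈ f, U.le p.1 q.1 ∧ U.le p.2 q.2}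

end AKST

open AKST AKST.SFT

namespace AKST
namespace SFT

/-- If `y` lies below `x` at height `α`, then `T.drop α x = y`. -/
lemma drop_eq (T : SFT) {x y α : Ordinal} (hy : y ∈ T.elems) (hht : ht y = α)
    (hlt : T.lt y x) : T.drop α x = y := by
  have h : ∃ z, z ∈ T.elems ∧ ht z = α ∧ T.lt z x := ⟨y, hy, hht, hlt⟩
  rw [drop, dif_pos h]
  obtain ⟨_, hz2, hz3⟩ := h.choose_spec
  rcases T.pred_linear hz3 hlt with h' | h' | h'
  · exact absurd (T.lt_ht h') (by rw [hz2, hht]; exact lt_irrefl _)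
  · exact h'
  · exact absurd (T.lt_ht h') (by rw [hht, hz2]; exact lt_irrefl _)

lemma lt_of_below (T : SFT) {a b c : Ordinal} (h1 : T.lt a c) (h2 : T.lt b c)
    (h : ht a < ht b) : T.lt a b := by
  rcases T.pred_linear h1 h2 with h' | h' | h'
  · exact h'
  · rw [h'] at h; exact absurd h (lt_irrefl _)
  · exact absurd (T.lt_ht h') (not_lt_of_gt h)

lemma heights_subset (T U : SFT) (h : Ext T U) : T.heights ⊆ U.heights := by
  rintro α ⟨hα0, x, hx, hht⟩
  exact ⟨hα0, x, h.1 hx, hht⟩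

lemma heights_finite (T : SFT) : T.heights.Finite := by
  apply (T.elems.finite_toSet.image ht).subset
  rintro α ⟨_, x, hx, hht⟩
  exact ⟨x, hx, hht⟩

lemma maxHeight_le (T U : SFT) (h : Ext T U) : T.maxHeight ≤ U.maxHeight := by
  rcases Set.eq_empty_or_nonempty T.heights with he | hne
  · simp [maxHeight, he]
  · exact csSup_le_csSup (U.heights_finite.bddAbove) hne (heights_subset T U h)

/-- If `α < maxHeight T` then some height of `T` exceeds `α`. -/
lemma exists_height_gt (T : SFT) {α : Ordinal} (h : α < T.maxHeight) :
    ∃ β ∈ T.heights, α < β := by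
  by_contra hc
  push_neg at hc
  rcases Set.eq_empty_or_nonempty T.heights with he | hne
  · rw [maxHeight, he, csSup_empty] at h
    exact absurd h (by simp)
  · exact absurd (csSup_le hne hc) (not_le_of_gt h)

lemma minAbove_mem (T : SFT) {α : Ordinal} (h : α < T.maxHeight) :
    T.minAbove α ∈ T.heights ∧ α < T.minAbove α := by
  obtain ⟨β, hβ, hαβ⟩ := T.exists_height_gt h
  exact csInf_mem (s := {δ | δ ∈ T.heights ∧ α < δ}) ⟨β, hβ, hαβ⟩

lemma minAbove_le (T : SFT) {α δ : Ordinal} (h1 : δ ∈ T.heights) (h2 : α < δ) :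
    T.minAbove α ≤ δ :=
  csInf_le (OrderBot.bddBelow {δ | δ ∈ T.heights ∧ α < δ})
    (Set.mem_setOf.mpr ⟨h1, h2⟩)

end SFT
end AKST

/-- Being a simple extension is transitive. -/
theorem stmt_1 (T U W : SFT) (h1 : SimpleExt U T) (h2 : SimpleExt W U) :
    SimpleExt W T := by
  obtain ⟨⟨hTU, hltTU⟩, hnew1, hud1⟩ := h1
  obtain ⟨⟨hUW, hltUW⟩, hnew2, hud2⟩ := h2
  have hextTU : Ext T U := ⟨hTU, fun h => hltTU h⟩
  have hextUW : Ext U W := ⟨hUW, fun h => hltUW h⟩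
  refine ⟨⟨hTU.trans hUW, fun h => hltUW (hltTU h)⟩, ?_, ?_⟩
  · -- new elements of W have new heights over T
    intro x hxW hxT hhx
    by_cases hxU : x ∈ U.elems
    · exact hnew1 x hxU hxT hhx
    · exact hnew2 x hxW hxU (heights_subset T U hextTU hhx)
  · -- unique drops
    intro α hαW hαT hαmax
    -- β := T.minAbove α
    set β := T.minAbove α with hβdef
    obtain ⟨hβT, hαβ⟩ := T.minAbove_mem hαmax
    by_cases hαU : α ∈ U.heights
    · -- α is already a height of U: transfer h1's unique drops
      have h1u := hud1 α hαU hαT hαmax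
      intro x hx y hy hdxy
      obtain ⟨hxT', hhx⟩ := hx
      obtain ⟨hyT', hhy⟩ := hy
      -- drops in U and in W agree
      have key : ∀ z ∈ T.elems, ht z = β → W.drop α z = U.drop α z := by
        intro z hzT hhz
        obtain ⟨_, w, hwU, hhw⟩ := hαU
        obtain ⟨u, huU, hhu, hlu⟩ := U.pred_level z (hTU hzT) α ⟨w, hwU, hhw⟩
          (by rw [hhz]; exact hαβ)
        rw [U.drop_eq huU hhu hlu, W.drop_eq (hUW huU) hhu (hltUW hlu)]
      rw [key x hxT' hhx, key y hyT' hhy] at hdxy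
      exact h1u x ⟨hxT', hhx⟩ y ⟨hyT', hhy⟩ hdxy
    · -- α is a new height of W over U
      have hαUmax : α < U.maxHeight := lt_of_lt_of_le hαmax (maxHeight_le T U hextTU)
      have h2u := hud2 α hαW hαU hαUmax
      -- γ := U.minAbove α
      set γ := U.minAbove α with hγdef
      have hβU : β ∈ U.heights := heights_subset T U hextTU hβT
      have hγmem : γ ∈ U.heights ∧ α < γ := csInf_mem (s := {δ | δ ∈ U.heights ∧ α < δ}) ⟨β, hβU, hαβ⟩
      have hγβ : γ ≤ β := U.minAbove_le hβU hαβ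
      rcases eq_or_lt_of_le hγβ with heq | hlt
      · -- γ = β: T-level β is contained in U-level γ
        intro x hx y hy hdxy
        exact h2u x ⟨hTU hx.1, by rw [hx.2, ← heq]⟩ y ⟨hTU hy.1, by rw [hy.2, ← heq]⟩ hdxy
      · -- γ < β
        -- T.minAbove γ = β
        have hγT : γ ∉ T.heights := by
          intro hc
          exact absurd (T.minAbove_le hc hγmem.2) (not_le_of_gt hlt)
        have hγTmax : γ < T.maxHeight :=
          lt_of_lt_of_le hlt (le_csSup (T.heights_finite.bddAbove) hβT)
        have hminγ : T.minAbove γ = β := by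
          have h1' : T.minAbove γ ∈ {δ | δ ∈ T.heights ∧ γ < δ} :=
            csInf_mem (s := {δ | δ ∈ T.heights ∧ γ < δ}) ⟨β, hβT, hlt⟩
          have hle1 : T.minAbove γ ≤ β := T.minAbove_le hβT hlt
          have hle2 : β ≤ T.minAbove γ :=
            T.minAbove_le h1'.1 (lt_trans hγmem.2 h1'.2)
          exact le_antisymm hle1 hle2
        have h1u := hud1 γ hγmem.1 hγT hγTmax
        rw [hminγ] at h1u
        intro x hx y hy hdxy
        obtain ⟨hxT', hhx⟩ := hx
        obtain ⟨hyT', hhy⟩ := hy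
        -- for z ∈ T-level β, produce z' := the drop of z to γ in U (= in W)
        obtain ⟨_, w0, hw0U, hhw0⟩ := hγmem.1
        obtain ⟨x', hx'U, hhx', hlx'⟩ := U.pred_level x (hTU hxT') γ ⟨w0, hw0U, hhw0⟩
          (by rw [hhx]; exact hlt)
        obtain ⟨y', hy'U, hhy', hly'⟩ := U.pred_level y (hTU hyT') γ ⟨w0, hw0U, hhw0⟩
          (by rw [hhy]; exact hlt)
        -- W-drops of x,y to α exist
        obtain ⟨_, wα, hwαW, hhwα⟩ := hαW
        obtain ⟨wx, hwxW, hhwx, hlwx⟩ := W.pred_level x (hUW (hTU hxT')) α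
          ⟨wα, hwαW, hhwα⟩ (by rw [hhx]; exact hαβ)
        obtain ⟨wy, hwyW, hhwy, hlwy⟩ := W.pred_level y (hUW (hTU hyT')) α
          ⟨wα, hwαW, hhwα⟩ (by rw [hhy]; exact hαβ)
        -- W.drop α x = wx, W.drop α y = wy
        rw [W.drop_eq hwxW hhwx hlwx, W.drop_eq hwyW hhwy hlwy] at hdxy
        -- wx lies below x' in W (both below x, heights compare)
        have hwxx' : W.lt wx x' :=
          W.lt_of_below hlwx (hltUW hlx') (by rw [hhwx, hhx']; exact hγmem.2)
        have hwyy' : W.lt wy y' :=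
          W.lt_of_below hlwy (hltUW hly') (by rw [hhwy, hhy']; exact hγmem.2)
        -- so W.drop α x' = wx and W.drop α y' = wy
        have hdx' : W.drop α x' = wx := W.drop_eq hwxW hhwx hwxx'
        have hdy' : W.drop α y' = wy := W.drop_eq hwyW hhwy hwyy'
        -- x', y' ∈ U.level γ, apply h2u
        have hx'y' : x' = y' := h2u x' ⟨hx'U, hhx'⟩ y' ⟨hy'U, hhy'⟩
          (by rw [hdx', hdy', hdxy])
        -- now U.drop γ x = x' = y' = U.drop γ y, apply h1u
        have := h1u x ⟨hxT', hhx⟩ y ⟨hyT', hhy⟩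
        apply this
        rw [U.drop_eq hx'U hhx' hlx', U.drop_eq hy'U hhy' hly', hx'y']
end
end

section
/- Let T be a standard finite tree and let f ⊆ T ⊗ T be downwards closed. Then f is a strictly increasing function if and only if for all pairs (a₀,b₀) and (a₁,b₁) in f, ht(a₀ ∧ a₁) ≤ ht(b₀ ∧ b₁). -/
noncomputable section
open scoped Classical

open AKST AKST.SFT

/- Dropping a pair of `f` down along its first coordinate stays in `f` (downward
closure), so both pairs drop to pairs at the meet `a₀ ∧ a₁`; if `f` is a function these share
their second coordinate, which then lies below `b₀ ∧ b₁`. Conversely, comparing a pair with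
itself or with a pair above it, the height inequality forces `b₀ ∧ b₁ = b₀`, i.e. `b₀ ≤ b₁`. -/

namespace AKST

lemma ht_zero : ht 0 = 0 := Ordinal.zero_div _

namespace SFT

variable (T : SFT) {w x y z : Ordinal}

lemma eq_zero_of_ht_eq_zero (hx : x ∈ T.elems) (h : ht x = 0) : x = 0 := by
  rcases T.mem_ok x hx with h0 | ⟨hω, -⟩
  · exact h0
  · have : 0 < ht x := (Ordinal.div_pos Ordinal.omega0_ne_zero).2 hω
    exact absurd h this.ne'

variable {T}

lemma mem_of_le_left (h : T.le x y) : x ∈ T.elems := by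
  rcases h with h | ⟨_, h⟩
  · exact (T.lt_mem h).1
  · exact h

lemma le_refl_of_mem (hx : x ∈ T.elems) : T.le x x := Or.inr ⟨rfl, hx⟩

lemma ht_le_ht_of_le (h : T.le x y) : ht x ≤ ht y := by
  rcases h with h | ⟨rfl, _⟩
  · exact (T.lt_ht h).le
  · exact le_rfl

lemma eq_of_le_of_ht_le (h : T.le x y) (hh : ht y ≤ ht x) : x = y := by
  rcases h with h | ⟨rfl, _⟩
  · exact absurd (T.lt_ht h) hh.not_gt
  · rfl

protected lemma le_antisymm (h : T.le x y) (h' : T.le y x) : x = y :=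
  eq_of_le_of_ht_le h (ht_le_ht_of_le h')

lemma lt_of_le_of_ht_lt (h : T.le x y) (hh : ht x < ht y) : T.lt x y := by
  rcases h with h | ⟨rfl, _⟩
  · exact h
  · exact absurd hh (lt_irrefl _)

protected lemma zero_le (hx : x ∈ T.elems) : T.le 0 x := by
  by_cases h0 : x = 0
  · exact Or.inr ⟨h0.symm, T.zero_mem⟩
  · have hpos : 0 < ht x := pos_iff_ne_zero.2 fun h => h0 (T.eq_zero_of_ht_eq_zero hx h)
    obtain ⟨y, hy, hy0, hyx⟩ := T.pred_level x hx 0 ⟨0, T.zero_mem, ht_zero⟩ hpos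
    rw [T.eq_zero_of_ht_eq_zero hy hy0] at hyx
    exact Or.inl hyx

lemma le_total_of_le (hw : T.le w x) (hz : T.le z x) : T.le w z ∨ T.le z w := by
  rcases hw with hw | ⟨rfl, -⟩
  · rcases hz with hz | ⟨rfl, -⟩
    · rcases T.pred_linear hw hz with h | rfl | h
      · exact Or.inl (Or.inl h)
      · exact Or.inl (le_refl_of_mem (T.lt_mem hw).1)
      · exact Or.inr (Or.inl h)
    · exact Or.inl (Or.inl hw)
  · exact Or.inr hz

/-- The common lower bound of greatest height is the meet, since the lower bounds of `x` form
a chain. -/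
lemma exists_isMeet (hx : x ∈ T.elems) (hy : y ∈ T.elems) : ∃ z, T.isMeet x y z := by
  let L := T.elems.filter fun z => T.le z x ∧ T.le z y
  have hL : L.Nonempty := ⟨0, Finset.mem_filter.2 ⟨T.zero_mem, T.zero_le hx, T.zero_le hy⟩⟩
  obtain ⟨z, hzL, hzmax⟩ := L.exists_max_image ht hL
  obtain ⟨-, hzx, hzy⟩ := Finset.mem_filter.1 hzL
  refine ⟨z, hzx, hzy, fun w hwx hwy => ?_⟩
  have hwz : ht w ≤ ht z := hzmax w (Finset.mem_filter.2 ⟨mem_of_le_left hwx, hwx, hwy⟩)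
  rcases le_total_of_le hwx hzx with h | h
  · exact h
  · rw [eq_of_le_of_ht_le h hwz]
    exact le_refl_of_mem (mem_of_le_left hwx)

lemma isMeet_unique (h : T.isMeet x y z) (h' : T.isMeet x y w) : z = w :=
  SFT.le_antisymm (h'.2.2 z h.1 h.2.1) (h.2.2 w h'.1 h'.2.1)

lemma meet_eq_of_isMeet (h : T.isMeet x y z) : T.meet x y = z := by
  have he : ∃ z, T.isMeet x y z := ⟨z, h⟩
  rw [SFT.meet, dif_pos he]
  exact isMeet_unique he.choose_spec h

lemma isMeet_meet (hx : x ∈ T.elems) (hy : y ∈ T.elems) : T.isMeet x y (T.meet x y) := by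
  obtain ⟨z, hz⟩ := exists_isMeet hx hy
  rwa [meet_eq_of_isMeet hz]

lemma meet_eq_left_of_le (h : T.le x y) : T.meet x y = x :=
  meet_eq_of_isMeet ⟨le_refl_of_mem (mem_of_le_left h), h, fun _ hw _ => hw⟩

lemma le_of_ht_le_ht_meet (hx : x ∈ T.elems) (hy : y ∈ T.elems)
    (h : ht x ≤ ht (T.meet x y)) : T.le x y := by
  have hm := isMeet_meet hx hy
  rw [← eq_of_le_of_ht_le hm.1 h]
  exact hm.2.1

end SFT

section Pairs

variable {T : SFT} {f : Set (Ordinal × Ordinal)}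

lemma DCPairs.exists_mem_of_le_fst (hsub : ∀ p ∈ f, InOtimes T p) (hdc : DCPairs T f)
    {a b z : Ordinal} (hab : (a, b) ∈ f) (hza : T.le z a) : ∃ d, T.le d b ∧ (z, d) ∈ f := by
  obtain ⟨-, hb, hht⟩ := hsub _ hab
  rcases hza with hza | ⟨rfl, -⟩
  · have hz : z ∈ T.elems := (T.lt_mem hza).1
    obtain ⟨d, hd, hdz, hdb⟩ :=
      T.pred_level b hb (ht z) ⟨z, hz, rfl⟩ (hht ▸ T.lt_ht hza)
    exact ⟨d, Or.inl hdb, hdc _ hab (z, d) ⟨hz, hd, hdz.symm⟩ (Or.inl hza) (Or.inl hdb)⟩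
  · exact ⟨b, SFT.le_refl_of_mem hb, hab⟩

lemma ht_meet_le_of_funcGraph (hsub : ∀ p ∈ f, InOtimes T p) (hdc : DCPairs T f)
    (hfun : FuncGraph f) {a₀ b₀ a₁ b₁ : Ordinal} (h₀ : (a₀, b₀) ∈ f) (h₁ : (a₁, b₁) ∈ f) :
    ht (T.meet a₀ a₁) ≤ ht (T.meet b₀ b₁) := by
  obtain ⟨ha₀, hb₀, -⟩ := hsub _ h₀
  obtain ⟨ha₁, hb₁, -⟩ := hsub _ h₁
  have hc := SFT.isMeet_meet ha₀ ha₁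
  obtain ⟨d₀, hd₀, hcd₀⟩ := hdc.exists_mem_of_le_fst hsub h₀ hc.1
  obtain ⟨d₁, hd₁, hcd₁⟩ := hdc.exists_mem_of_le_fst hsub h₁ hc.2.1
  have hd : T.le d₀ (T.meet b₀ b₁) :=
    (SFT.isMeet_meet hb₀ hb₁).2.2 d₀ hd₀ (hfun hcd₀ hcd₁ ▸ hd₁)
  calc ht (T.meet a₀ a₁) = ht d₀ := (hsub _ hcd₀).2.2
    _ ≤ ht (T.meet b₀ b₁) := SFT.ht_le_ht_of_le hd

section HtMeetLe

variable (hsub : ∀ p ∈ f, InOtimes T p)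
  (h : ∀ a₀ b₀ a₁ b₁, (a₀, b₀) ∈ f → (a₁, b₁) ∈ f → ht (T.meet a₀ a₁) ≤ ht (T.meet b₀ b₁))
include hsub h

lemma le_snd_of_ht_meet_le {x y x' y' : Ordinal} (hxy : (x, y) ∈ f) (hxy' : (x', y') ∈ f)
    (hx : T.le x x') : T.le y y' := by
  obtain ⟨-, hy, hxy_ht⟩ := hsub _ hxy
  obtain ⟨-, hy', -⟩ := hsub _ hxy'
  have := h x y x' y' hxy hxy'
  rw [SFT.meet_eq_left_of_le hx, hxy_ht] at this
  exact SFT.le_of_ht_le_ht_meet hy hy' this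

lemma funcGraph_of_ht_meet_le : FuncGraph f := fun hxy hxy' =>
  have hx := SFT.le_refl_of_mem (hsub _ hxy).1
  SFT.le_antisymm (le_snd_of_ht_meet_le hsub h hxy hxy' hx)
    (le_snd_of_ht_meet_le hsub h hxy' hxy hx)

lemma strictIncr_of_ht_meet_le : StrictIncr T f := fun hxy hxy' hx =>
  SFT.lt_of_le_of_ht_lt (le_snd_of_ht_meet_le hsub h hxy hxy' (Or.inl hx))
    ((hsub _ hxy).2.2 ▸ (hsub _ hxy').2.2 ▸ T.lt_ht hx)

end HtMeetLe

end Pairs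

end AKST

/-- For `f ⊆ T ⊗ T` downwards closed, `f` is a strictly increasing function
iff for all `(a₀,b₀), (a₁,b₁) ∈ f`, `ht(a₀ ∧ a₁) ≤ ht(b₀ ∧ b₁)`. -/
theorem stmt_6 (T : SFT) (f : Set (Ordinal × Ordinal))
    (hsub : ∀ p ∈ f, InOtimes T p) (hdc : DCPairs T f) :
    (FuncGraph f ∧ StrictIncr T f) ↔
      (∀ a₀ b₀ a₁ b₁, (a₀, b₀) ∈ f → (a₁, b₁) ∈ f →
        ht (T.meet a₀ a₁) ≤ ht (T.meet b₀ b₁)) :=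
  ⟨fun ⟨hfun, _⟩ _ _ _ _ h₀ h₁ => ht_meet_le_of_funcGraph hsub hdc hfun h₀ h₁,
    fun h => ⟨funcGraph_of_ht_meet_le hsub h, strictIncr_of_ht_meet_le hsub h⟩⟩
end
end

section
/- (Strong Persistence) Let T be a standard finite tree and {f_ξ : ξ ∈ A} a finite indexed family of standard functions on T. Let α < β in ht[T] and X ⊆ T_α. If {f_ξ : ξ ∈ A} is separated on X, then {f_ξ : ξ ∈ A} is separated on Y = {b ∈ T_β : ∃x ∈ X, x <_T b}. -/
noncomputable section
open scoped Classical

open AKST AKST.SFT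

/-- Any finite set of ordinals admits an injective enumeration. -/
lemma enum_of_finite (S : Set Ordinal) (hS : S.Finite) :
    ∃ (m : ℕ) (e : ℕ → Ordinal), (∀ i < m, ∀ j < m, e i = e j → i = j) ∧
      S = e '' {i | i < m} := by
  classical
  set L := hS.toFinset.toList with hL
  have hnd : L.Nodup := hS.toFinset.nodup_toList
  refine ⟨L.length, fun i => L.getD i 0, ?_, ?_⟩
  · intro i hi j hj hij
    have hij' : L.getD i 0 = L.getD j 0 := hij
    rw [List.getD_eq_getElem L 0 hi, List.getD_eq_getElem L 0 hj] at hij'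
    exact (List.Nodup.getElem_inj_iff hnd).mp hij'
  · ext x
    have : x ∈ S ↔ x ∈ L := by
      rw [hL, Finset.mem_toList, Set.Finite.mem_toFinset]
    rw [this, List.mem_iff_getElem]
    constructor
    · rintro ⟨i, hi, rfl⟩
      exact ⟨i, hi, (List.getD_eq_getElem L 0 hi)⟩
    · rintro ⟨i, hi, rfl⟩
      exact ⟨i, hi, (List.getD_eq_getElem L 0 hi).symm⟩

/-- Strong Persistence: if the family is separated on `X ⊆ T_α` and
`α < β` in `ht[T]`, then it is separated on `Y = {b ∈ T_β : ∃ x ∈ X, x <_T b}`. -/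
theorem stmt_10 (T : SFT) (F : Ordinal → Set (Ordinal × Ordinal)) (A : Finset Ordinal)
    (hstd : ∀ τ ∈ A, IsStdFun T (F τ)) (α β : Ordinal)
    (hα : α ∈ T.heights) (hβ : β ∈ T.heights) (hαβ : α < β)
    (X : Set Ordinal) (hX : X ⊆ T.level α) (hsep : SepOnSet F A X) :
    SepOnSet F A {b | b ∈ T.level β ∧ ∃ x ∈ X, T.lt x b} := by
  classical
  obtain ⟨n, a, hainj, hXa, hasep⟩ := hsep
  set Y : Set Ordinal := {b | b ∈ T.level β ∧ ∃ x ∈ X, T.lt x b} with hYdef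
  set Yk : ℕ → Set Ordinal := fun k => {b | b ∈ Y ∧ T.lt (a k) b} with hYkdef
  have haX : ∀ k < n, a k ∈ X := by
    intro k hk; rw [hXa]; exact ⟨k, hk, rfl⟩
  have haht : ∀ k < n, ht (a k) = α := fun k hk => (hX (haX k hk)).2
  have hαne : α ≠ 0 := hα.1
  have hane : ∀ k < n, a k ≠ 0 := by
    intro k hk h0
    apply hαne
    rw [← haht k hk, h0]
    simp [ht, Ordinal.zero_div]
  have hpredu : ∀ u v x, T.lt u x → T.lt v x → ht u = ht v → u = v := by
    intro u v x h1 h2 he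
    rcases T.pred_linear h1 h2 with h | h | h
    · exact absurd (T.lt_ht h) (by rw [he]; exact lt_irrefl _)
    · exact h
    · exact absurd (T.lt_ht h) (by rw [he]; exact lt_irrefl _)
  have hYkdisj : ∀ k < n, ∀ k' < n, ∀ x, x ∈ Yk k → x ∈ Yk k' → k = k' := by
    intro k hk k' hk' x hx hx'
    have := hpredu (a k) (a k') x hx.2 hx'.2 (by rw [haht k hk, haht k' hk'])
    exact hainj k hk k' hk' this
  have hdrop : ∀ τ ∈ A, ∀ k < n, ∀ k' < n, ∀ x y, x ∈ Yk k → y ∈ Yk k' →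
      (x, y) ∈ F τ → (a k, a k') ∈ F τ := by
    intro τ hτ k hk k' hk' x y hx hy hxy
    obtain ⟨hc, hfun, hinj, hincr, hlev, hdc, hnf⟩ := hstd τ hτ
    have hhtx : ht x = β := hx.1.1.2
    obtain ⟨x', y', hx'e, hx'ht, hx'lt, hx'y'⟩ :=
      hdc x y hxy α hα (by rw [hhtx]; exact hαβ)
    have hx'a : x' = a k := hpredu x' (a k) x hx'lt hx.2 (by rw [hx'ht, haht k hk])
    have hy'lt : T.lt y' y := hincr hx'y' hxy hx'lt
    have hy'ht0 : ht x' = ht y' := hlev (x', y') hx'y'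
    have hy'a : y' = a k' := hpredu y' (a k') y hy'lt hy.2
      (by rw [← hy'ht0, hx'ht, haht k' hk'])
    rw [← hx'a, ← hy'a]; exact hx'y'
  have happ : ∀ τ ∈ A, ∀ m : ℤ, ∀ k < n, ∀ k' < n, ∀ x y, x ∈ Yk k → y ∈ Yk k' →
      appPow (F τ) m x y → appPow (F τ) m (a k) (a k') := by
    intro τ hτ m k hk k' hk' x y hx hy h
    rcases h with ⟨hm, hmem⟩ | ⟨hm, hmem⟩
    · exact Or.inl ⟨hm, hdrop τ hτ k hk k' hk' x y hx hy hmem⟩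
    · exact Or.inr ⟨hm, hdrop τ hτ k' hk' k hk y x hy hx hmem⟩
  have hnoself : ∀ τ ∈ A, ∀ m : ℤ, ∀ k < n, ∀ x y, x ∈ Yk k → y ∈ Yk k →
      appPow (F τ) m x y → False := by
    intro τ hτ m k hk x y hx hy h
    have h2 := happ τ hτ m k hk k hk x y hx hy h
    obtain ⟨hc, hfun, hinj, hincr, hlev, hdc, hnf⟩ := hstd τ hτ
    rcases h2 with ⟨_, hmem⟩ | ⟨_, hmem⟩ <;> exact hane k hk (hnf _ hmem)
  have hYkfin : ∀ k, (Yk k).Finite := by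
    intro k
    apply (T.elems.finite_toSet).subset
    intro x hx
    exact hx.1.1.1
  have main : ∀ k, k ≤ n → ∃ N, ∃ b : ℕ → Ordinal,
      (∀ i < N, ∀ j < N, b i = b j → i = j) ∧
      (b '' {i | i < N} = {y | ∃ k' < k, y ∈ Yk k'}) ∧
      SepOnTuple F A N b := by
    intro k
    induction k with
    | zero =>
      intro _
      refine ⟨0, fun _ => 0, by intro i hi; omega, ?_, ?_⟩
      · ext y; simp
      · intro i hi; exact absurd hi (Nat.not_lt_zero i)
    | succ k ih =>
      intro hk1
      obtain ⟨N, b, hbinj, hbim, hbsep⟩ := ih (Nat.le_of_succ_le hk1)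
      have hkn : k < n := hk1
      obtain ⟨m, e, heinj, heim⟩ := enum_of_finite (Yk k) (hYkfin k)
      have hbY : ∀ i < N, ∃ k' < k, b i ∈ Yk k' := by
        intro i hi
        have : b i ∈ b '' {i | i < N} := ⟨i, hi, rfl⟩
        rw [hbim] at this; exact this
      have heY : ∀ i < m, e i ∈ Yk k := by
        intro i hi
        have : e i ∈ e '' {i | i < m} := ⟨i, hi, rfl⟩
        rw [← heim] at this; exact this
      refine ⟨N + m, fun i => if i < N then b i else e (i - N), ?_, ?_, ?_⟩
      · intro i hi j hj hij
        by_cases h1 : i < N <;> by_cases h2 : j < N <;>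
          simp only [if_pos, if_neg, h1, h2, if_true, if_false] at hij
        · exact hbinj i h1 j h2 hij
        · obtain ⟨k', hk', hbk'⟩ := hbY i h1
          have hek : e (j - N) ∈ Yk k := heY _ (by omega)
          rw [hij] at hbk'
          exact absurd (hYkdisj k' (lt_trans hk' hkn) k hkn _ hbk' hek) (by omega)
        · obtain ⟨k', hk', hbk'⟩ := hbY j h2
          have hek : e (i - N) ∈ Yk k := heY _ (by omega)
          rw [← hij] at hbk'
          exact absurd (hYkdisj k' (lt_trans hk' hkn) k hkn _ hbk' hek) (by omega)
        · have := heinj (i - N) (by omega) (j - N) (by omega) hij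
          omega
      · ext y
        simp only [Set.mem_image, Set.mem_setOf_eq]
        constructor
        · rintro ⟨i, hi, rfl⟩
          by_cases h1 : i < N
          · rw [if_pos h1]
            obtain ⟨k', hk', hbk'⟩ := hbY i h1
            exact ⟨k', by omega, hbk'⟩
          · rw [if_neg h1]
            exact ⟨k, by omega, heY (i - N) (by omega)⟩
        · rintro ⟨k', hk', hy⟩
          by_cases h : k' < k
          · have : y ∈ b '' {i | i < N} := by rw [hbim]; exact ⟨k', h, hy⟩
            obtain ⟨i, hi, rfl⟩ := this
            have hiN : i < N := hi
            exact ⟨i, by omega, by rw [if_pos hiN]⟩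
          · have hk'' : k' = k := by omega
            subst hk''
            have : y ∈ e '' {i | i < m} := by rw [← heim]; exact hy
            obtain ⟨i, hi, rfl⟩ := this
            have him : i < m := hi
            refine ⟨N + i, by omega, ?_⟩
            rw [if_neg (by omega)]
            congr 1
            omega
      · intro i hi j₀ hj₀ j₁ hj₁ m₀ m₁ τ₀ hτ₀ τ₁ hτ₁ hm₀ hm₁ h₀ h₁
        by_cases h1 : i < N
        · have hj0N : j₀ < N := by omega
          have hj1N : j₁ < N := by omega
          simp only [if_pos h1, if_pos hj0N, if_pos hj1N] at h₀ h₁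
          exact hbsep i h1 j₀ hj₀ j₁ hj₁ m₀ m₁ τ₀ hτ₀ τ₁ hτ₁ hm₀ hm₁ h₀ h₁
        · have hiY : e (i - N) ∈ Yk k := heY _ (by omega)
          have hjold : ∀ j, ∀ mm : ℤ, ∀ τ, τ ∈ A → j < N + m →
              appPow (F τ) mm (if i < N then b i else e (i - N))
                (if j < N then b j else e (j - N)) → j < N := by
            intro j mm τ hτ hjm hap
            by_contra hjN
            push_neg at hjN
            rw [if_neg h1, if_neg (by omega)] at hap
            exact hnoself τ hτ mm k hkn _ _ hiY (heY _ (by omega)) hap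
          have hj0N := hjold j₀ m₀ τ₀ hτ₀ (by omega) h₀
          have hj1N := hjold j₁ m₁ τ₁ hτ₁ (by omega) h₁
          beta_reduce at h₀ h₁
          rw [if_neg h1, if_pos hj0N] at h₀
          rw [if_neg h1, if_pos hj1N] at h₁
          obtain ⟨k₀, hk₀, hbk₀⟩ := hbY j₀ hj0N
          obtain ⟨k₁, hk₁, hbk₁⟩ := hbY j₁ hj1N
          have ha₀ := happ τ₀ hτ₀ m₀ k hkn k₀ (lt_trans hk₀ hkn) _ _ hiY hbk₀ h₀
          have ha₁ := happ τ₁ hτ₁ m₁ k hkn k₁ (lt_trans hk₁ hkn) _ _ hiY hbk₁ h₁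
          obtain ⟨hkk, hmm, hττ⟩ :=
            hasep k hkn k₀ hk₀ k₁ hk₁ m₀ m₁ τ₀ hτ₀ τ₁ hτ₁ hm₀ hm₁ ha₀ ha₁
          subst hmm; subst hττ
          obtain ⟨hc, hfun, hinj, hincr, hlev, hdc, hnf⟩ := hstd τ₀ hτ₀
          have hbb : b j₀ = b j₁ := by
            rcases h₀ with ⟨he1, hmem1⟩ | ⟨he1, hmem1⟩ <;>
              rcases h₁ with ⟨he2, hmem2⟩ | ⟨he2, hmem2⟩
            · exact hfun hmem1 hmem2
            · omega
            · omega
            · exact hinj hmem1 hmem2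
          exact ⟨hbinj j₀ hj0N j₁ hj1N hbb, rfl, rfl⟩
  obtain ⟨N, b, hbinj, hbim, hbsep⟩ := main n le_rfl
  refine ⟨N, b, hbinj, ?_, hbsep⟩
  rw [hbim]
  ext y
  simp only [Set.mem_setOf_eq]
  constructor
  · rintro hy
    obtain ⟨hy1, x, hxX, hxy⟩ := hy
    have : x ∈ a '' {i | i < n} := by rw [← hXa]; exact hxX
    obtain ⟨kk, hkk, rfl⟩ := this
    exact ⟨kk, hkk, ⟨⟨hy1, a kk, hxX, hxy⟩, hxy⟩⟩
  · rintro ⟨k', hk', hy⟩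
    exact hy.1
end
end

section
/- (Downward Persistence) Let T be a standard finite tree, {f_ξ : ξ ∈ A} a finite indexed family of standard functions on T with A ⊆ ω₂, and α < β in ht[T]. Suppose X ⊆ T_β has unique drop-downs to α and for all τ ∈ A, X↾α and X are f_τ-consistent. If {f_ξ : ξ ∈ A} is ρ-separated on X, then {f_ξ : ξ ∈ A} is ρ-separated on X↾α. -/
noncomputable section
open scoped Classical

open AKST AKST.SFT

/-- Downward Persistence: if `X ⊆ T_β` has unique drop-downs to `α`,
`X↾α` and `X` are `f_τ`-consistent for all `τ ∈ A`, and the family is `ρ`-separated on `X`,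
then the family is `ρ`-separated on `X↾α`. -/
theorem stmt_11 (ρ : Ordinal → Ordinal → Ordinal)
    (hsym : ∀ a b, ρ a b = ρ b a) (hzero : ∀ a, ρ a a = 0)
    (hcod : ∀ a b, a < ω2 → b < ω2 → ρ a b < ω1)
    (T : SFT) (F : Ordinal → Set (Ordinal × Ordinal)) (A : Finset Ordinal)
    (hA : ∀ τ ∈ A, τ < ω2) (hstd : ∀ τ ∈ A, IsStdFun T (F τ))
    (α β : Ordinal) (hα : α ∈ T.heights) (hβ : β ∈ T.heights) (hαβ : α < β)
    (X : Set Ordinal) (hX : X ⊆ T.level β)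
    (hud : UniqueDrops T α X)
    (hcons : ∀ τ ∈ A, Consistent T (F τ) α X)
    (hsep : RhoSepOnSet ρ F A β X) :
    RhoSepOnSet ρ F A α (T.drop α '' X) := by
  obtain ⟨n, a, hinj, hXa, htup⟩ := hsep
  refine ⟨n, fun i => T.drop α (a i), ?_, ?_, ?_⟩
  · intro i hi j hj hij
    have hai : a i ∈ X := by rw [hXa]; exact ⟨i, hi, rfl⟩
    have haj : a j ∈ X := by rw [hXa]; exact ⟨j, hj, rfl⟩
    exact hinj i hi j hj (hud _ hai _ haj hij)
  · rw [hXa]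
    ext x
    constructor
    · rintro ⟨y, ⟨i, hi, rfl⟩, rfl⟩; exact ⟨i, hi, rfl⟩
    · rintro ⟨i, hi, rfl⟩; exact ⟨a i, ⟨i, hi, rfl⟩, rfl⟩
  · intro i hi j₀ hj₀ j₁ hj₁ m₀ m₁ τ₀ hτ₀ τ₁ hτ₁ hm₀ hm₁ h0 h1
    have hai : a i ∈ X := by rw [hXa]; exact ⟨i, hi, rfl⟩
    have haj0 : a j₀ ∈ X := by rw [hXa]; exact ⟨j₀, hj₀.trans hi, rfl⟩
    have haj1 : a j₁ ∈ X := by rw [hXa]; exact ⟨j₁, hj₁.trans hi, rfl⟩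
    have lift : ∀ τ ∈ A, ∀ m : ℤ, ∀ {x y}, x ∈ X → y ∈ X →
        appPow (F τ) m (T.drop α x) (T.drop α y) → appPow (F τ) m x y := by
      intro τ hτ m x y hx hy h
      rcases h with ⟨hm, hmem⟩ | ⟨hm, hmem⟩
      · exact Or.inl ⟨hm, (hcons τ hτ x hx y hy).mp hmem⟩
      · exact Or.inr ⟨hm, (hcons τ hτ y hy x hx).mp hmem⟩
    have h0' := lift τ₀ hτ₀ m₀ hai haj0 h0
    have h1' := lift τ₁ hτ₁ m₁ hai haj1 h1
    have := htup i hi j₀ hj₀ j₁ hj₁ m₀ m₁ τ₀ hτ₀ τ₁ hτ₁ hm₀ hm₁ h0' h1'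
    refine ⟨this.1, ?_⟩
    rcases this.2 with h | h
    · exact Or.inl h
    · exact Or.inr (le_of_lt (lt_of_lt_of_le hαβ h))
end
end

section
/- (Characterization of ρ-Separation) Let T be a standard finite tree, {f_ξ : ξ ∈ A} a finite indexed family of standard functions on T, α ∈ ht[T], and X ⊆ T_α. Then {f_ξ : ξ ∈ A} is ρ-separated on X if and only if: (1) for all x, y ∈ X, if (m₀,τ₀) and (m₁,τ₁) are distinct pairs with m_k ∈ {-1,1}, τ_k ∈ A, and f_{τ_k}^{m_k}(x) = y for each k < 2, then ρ(τ₀,τ₁) ≥ α; and (2) there is no loop in X with respect to the family, i.e., no sequence ⟨c₀,...,c_{p-1}⟩ with p ≥ 4, ⟨c₀,...,c_{p-2}⟩ injective, c₀ = c_{p-1}, and for each i < p-1 some τ ∈ A and m ∈ {-1,1} with f_τ^m(c_i) = c_{i+1}. -/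
noncomputable section
open scoped Classical

open AKST AKST.SFT

private lemma appPow_symm' {f : Set (Ordinal × Ordinal)} {m : ℤ} {x y : Ordinal}
    (h : appPow f m x y) : appPow f (-m) y x := by
  rcases h with ⟨rfl, h⟩ | ⟨rfl, h⟩
  · exact Or.inr ⟨by norm_num, h⟩
  · exact Or.inl ⟨by norm_num, h⟩

private lemma neg_pm {m : ℤ} (h : m = 1 ∨ m = -1) : -m = 1 ∨ -m = -1 := by
  rcases h with rfl | rfl
  · exact Or.inr (by norm_num)
  · exact Or.inl (by norm_num)

/-- In a finite graph with no cycle of length ≥ 3, some vertex has at most one neighbor. -/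
private lemma exists_leaf (E : Ordinal → Ordinal → Prop)
    (hirr : ∀ x, ¬ E x x)
    (S : Finset Ordinal) (hS : S.Nonempty)
    (hnc : ¬ ∃ p : ℕ, 4 ≤ p ∧ ∃ c : ℕ → Ordinal, (∀ i < p, c i ∈ S) ∧
      (∀ i < p - 1, ∀ j < p - 1, c i = c j → i = j) ∧ c 0 = c (p - 1) ∧
      (∀ i < p - 1, E (c i) (c (i + 1)))) :
    ∃ x ∈ S, ∀ y ∈ S, ∀ z ∈ S, E x y → E x z → y = z := by
  by_contra hcon
  push_neg at hcon
  have step : ∀ x ∈ S, ∀ p : Ordinal, ∃ y, y ∈ S ∧ E x y ∧ y ≠ p := by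
    intro x hx p
    obtain ⟨y, hy, z, hz, exy, exz, hyz⟩ := hcon x hx
    by_cases hyp : y = p
    · subst hyp
      exact ⟨z, hz, exz, fun h => hyz h.symm⟩
    · exact ⟨y, hy, exy, hyp⟩
  choose nbr hnbrS hnbrE hnbrNe using step
  obtain ⟨x0, hx0⟩ := hS
  obtain ⟨y0, hy0, -, -, ex0, -, -⟩ := hcon x0 hx0
  let s : ℕ → {q : Ordinal × Ordinal // q.1 ∈ S ∧ q.2 ∈ S ∧ E q.1 q.2} := fun n =>
    Nat.rec ⟨(x0, y0), hx0, hy0, ex0⟩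
      (fun _ pr => ⟨(pr.1.2, nbr pr.1.2 pr.2.2.1 pr.1.1),
        pr.2.2.1, hnbrS _ _ _, hnbrE _ _ _⟩) n
  let w : ℕ → Ordinal := fun n => (s n).1.1
  have hwS : ∀ n, w n ∈ S := fun n => (s n).2.1
  have hws : ∀ n, w (n + 1) = (s n).1.2 := fun n => rfl
  have hwE : ∀ n, E (w n) (w (n + 1)) := fun n => by
    rw [hws]; exact (s n).2.2.2
  have hwne : ∀ n, w (n + 2) ≠ w n := by
    intro n
    have h2 : w (n + 2) = nbr (s n).1.2 (s n).2.2.1 (s n).1.1 := rfl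
    rw [h2]
    exact hnbrNe _ _ _
  obtain ⟨u, hu, v, hv, huv, hwuv⟩ :=
    Finset.exists_ne_map_eq_of_card_lt_of_maps_to
      (s := Finset.range (S.card + 1)) (t := S)
      (by simp) (fun n _ => hwS n)
  have hex : ∃ k, ∃ j, j < k ∧ w j = w k := by
    rcases lt_or_gt_of_ne huv with h | h
    · exact ⟨v, u, h, hwuv⟩
    · exact ⟨u, v, h, hwuv.symm⟩
  classical
  obtain ⟨j, hjk, hwjk⟩ := Nat.find_spec hex
  set k := Nat.find hex with hkdef
  have hpref : ∀ u' v', u' < v' → v' < k → w u' ≠ w v' := by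
    intro u' v' huv' hvk heq
    exact Nat.find_min hex hvk ⟨u', huv', heq⟩
  have hk1 : j + 1 ≠ k := by
    intro h
    have he := hwE j
    rw [h, ← hwjk] at he
    exact hirr _ he
  have hk2 : j + 2 ≠ k := by
    intro h
    exact hwne j (by rw [h]; exact hwjk.symm)
  have hk3 : j + 3 ≤ k := by omega
  apply hnc
  refine ⟨k - j + 1, by omega, fun i => w (j + i), fun i _ => hwS _, ?_, ?_, ?_⟩
  · intro i hi i' hi' heq
    by_contra hne
    rcases lt_or_gt_of_ne hne with h | h
    · exact hpref _ _ (by omega) (by omega) heq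
    · exact hpref _ _ (by omega) (by omega) heq.symm
  · show w (j + 0) = w (j + (k - j + 1 - 1))
    rw [show j + 0 = j from rfl, show j + (k - j + 1 - 1) = k by omega]
    exact hwjk
  · intro i hi
    show E (w (j + i)) (w (j + (i + 1)))
    rw [show j + (i + 1) = (j + i) + 1 by omega]
    exact hwE _

/-- A finite graph with no cycle of length ≥ 3 admits an ordering in which every
vertex has at most one earlier neighbor. -/
private lemma order_exists (E : Ordinal → Ordinal → Prop)
    (hirr : ∀ x, ¬ E x x) :
    ∀ (N : ℕ) (S : Finset Ordinal), S.card ≤ N →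
    (¬ ∃ p : ℕ, 4 ≤ p ∧ ∃ c : ℕ → Ordinal, (∀ i < p, c i ∈ S) ∧
      (∀ i < p - 1, ∀ j < p - 1, c i = c j → i = j) ∧ c 0 = c (p - 1) ∧
      (∀ i < p - 1, E (c i) (c (i + 1)))) →
    ∃ (n : ℕ) (a : ℕ → Ordinal), (∀ i < n, ∀ j < n, a i = a j → i = j) ∧
      (↑S : Set Ordinal) = a '' {i | i < n} ∧
      (∀ i < n, ∀ j₀ < i, ∀ j₁ < i, E (a i) (a j₀) → E (a i) (a j₁) → j₀ = j₁) := by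
  intro N
  induction N with
  | zero =>
    intro S hcard hnc
    have hemp : S = ∅ := Finset.card_eq_zero.mp (le_antisymm hcard (Nat.zero_le _))
    subst hemp
    exact ⟨0, fun _ => 0, by intro i hi; omega, by ext x; simp, by intro i hi; omega⟩
  | succ N ih =>
    intro S hcard hnc
    rcases S.eq_empty_or_nonempty with rfl | hne
    · exact ⟨0, fun _ => 0, by intro i hi; omega, by ext x; simp, by intro i hi; omega⟩
    · obtain ⟨x, hxS, hleaf⟩ := exists_leaf E hirr S hne hnc
      have hnc' : ¬ ∃ p : ℕ, 4 ≤ p ∧ ∃ c : ℕ → Ordinal, (∀ i < p, c i ∈ S.erase x) ∧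
          (∀ i < p - 1, ∀ j < p - 1, c i = c j → i = j) ∧ c 0 = c (p - 1) ∧
          (∀ i < p - 1, E (c i) (c (i + 1))) := by
        rintro ⟨p, hp, c, h1, h2, h3, h4⟩
        exact hnc ⟨p, hp, c, fun i hi => Finset.mem_of_mem_erase (h1 i hi), h2, h3, h4⟩
      have hcard' : (S.erase x).card ≤ N := by
        have h1 := Finset.card_erase_of_mem hxS
        have h2 : 0 < S.card := Finset.card_pos.mpr hne
        omega
      obtain ⟨n, a, hinj, himg, hord⟩ := ih (S.erase x) hcard' hnc'
      have haE : ∀ j, j < n → a j ∈ S.erase x := by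
        intro j hj
        have h : a j ∈ (↑(S.erase x) : Set Ordinal) := by rw [himg]; exact ⟨j, hj, rfl⟩
        exact h
      set b : ℕ → Ordinal := fun i => if i = n then x else a i with hb
      have hbn : b n = x := if_pos rfl
      have hbl : ∀ j, j < n → b j = a j := fun j hj => if_neg (by omega)
      refine ⟨n + 1, b, ?_, ?_, ?_⟩
      · intro i hi j hj heq
        by_cases hin : i = n <;> by_cases hjn : j = n
        · omega
        · rw [hin, hbn, hbl j (by omega)] at heq
          exact absurd heq.symm (Finset.ne_of_mem_erase (haE j (by omega)))
        · rw [hbl i (by omega), hjn, hbn] at heq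
          exact absurd heq (Finset.ne_of_mem_erase (haE i (by omega)))
        · rw [hbl i (by omega), hbl j (by omega)] at heq
          exact hinj i (by omega) j (by omega) heq
      · ext y
        constructor
        · intro hy
          have hy' : y ∈ S := hy
          by_cases hyx : y = x
          · exact ⟨n, Nat.lt_succ_self n, by rw [hbn, hyx]⟩
          · have hm : y ∈ (↑(S.erase x) : Set Ordinal) := Finset.mem_erase.mpr ⟨hyx, hy'⟩
            rw [himg] at hm
            obtain ⟨j, hj, hj2⟩ := hm
            have hj' : j < n := hj
            exact ⟨j, Nat.lt_succ_of_lt hj', by rw [hbl j hj']; exact hj2⟩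
        · rintro ⟨j, hj, rfl⟩
          have hj' : j < n + 1 := hj
          by_cases hjn : j = n
          · rw [hjn, hbn]; exact hxS
          · rw [hbl j (by omega)]
            exact Finset.mem_of_mem_erase (haE j (by omega))
      · intro i hi j₀ hj₀ j₁ hj₁ e₀ e₁
        by_cases hin : i = n
        · subst hin
          rw [hbn, hbl j₀ (by omega)] at e₀
          rw [hbn, hbl j₁ (by omega)] at e₁
          have h01 : a j₀ = a j₁ :=
            hleaf (a j₀) (Finset.mem_of_mem_erase (haE j₀ (by omega)))
              (a j₁) (Finset.mem_of_mem_erase (haE j₁ (by omega))) e₀ e₁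
          exact hinj j₀ (by omega) j₁ (by omega) h01
        · rw [hbl i (by omega), hbl j₀ (by omega)] at e₀
          rw [hbl i (by omega), hbl j₁ (by omega)] at e₁
          exact hord i (by omega) j₀ hj₀ j₁ hj₁ e₀ e₁

/-- Characterization of ρ-Separation: the family is `ρ`-separated on
`X ⊆ T_α` iff (1) any two distinct pairs `(m,τ)` relating `x` to `y` in `X` satisfy
`ρ(τ₀,τ₁) ≥ α`, and (2) there is no loop in `X` with respect to the family. -/
theorem stmt_12 (ρ : Ordinal → Ordinal → Ordinal)
    (hsym : ∀ a b, ρ a b = ρ b a) (hzero : ∀ a, ρ a a = 0)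
    (T : SFT) (F : Ordinal → Set (Ordinal × Ordinal)) (A : Finset Ordinal)
    (hstd : ∀ τ ∈ A, IsStdFun T (F τ)) (α : Ordinal) (hα : α ∈ T.heights)
    (X : Set Ordinal) (hX : X ⊆ T.level α) :
    RhoSepOnSet ρ F A α X ↔
      ((∀ x ∈ X, ∀ y ∈ X, ∀ m₀ m₁ : ℤ, ∀ τ₀ ∈ A, ∀ τ₁ ∈ A,
          (m₀ = 1 ∨ m₀ = -1) → (m₁ = 1 ∨ m₁ = -1) →
          appPow (F τ₀) m₀ x y → appPow (F τ₁) m₁ x y →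
          ¬(m₀ = m₁ ∧ τ₀ = τ₁) → α ≤ ρ τ₀ τ₁) ∧
        ¬ HasLoop F A X) := by
  have hα0 : α ≠ 0 := hα.1
  have hht0 : ht (0 : Ordinal) = 0 := by simp [ht]
  have hXht : ∀ x ∈ X, ht x = α := fun x hx => (hX hx).2
  have hX0 : ∀ x ∈ X, x ≠ 0 := by
    intro x hx h0
    apply hα0
    rw [← hXht x hx, h0, hht0]
  have hnofix : ∀ τ ∈ A, ∀ x ∈ X, ∀ m : ℤ, ¬ appPow (F τ) m x x := by
    intro τ hτ x hx m h
    rcases h with ⟨-, h⟩ | ⟨-, h⟩ <;>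
      exact hX0 x hx ((hstd τ hτ).2.2.2.2.2.2 x h)
  constructor
  · rintro ⟨n, a, hinj, himg, hsep⟩
    constructor
    · intro x hx y hy m₀ m₁ τ₀ hτ₀ τ₁ hτ₁ hm₀ hm₁ h₀ h₁ hne
      obtain ⟨i, hi, rfl⟩ : ∃ i, i < n ∧ a i = x := by
        rw [himg] at hx; obtain ⟨i, hi, h⟩ := hx; exact ⟨i, hi, h⟩
      obtain ⟨j, hj, rfl⟩ : ∃ j, j < n ∧ a j = y := by
        rw [himg] at hy; obtain ⟨j, hj, h⟩ := hy; exact ⟨j, hj, h⟩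
      rcases lt_trichotomy i j with h | h | h
      · have h₀' := appPow_symm' h₀
        have h₁' := appPow_symm' h₁
        have hres := hsep j hj i h i h (-m₀) (-m₁) τ₀ hτ₀ τ₁ hτ₁
          (neg_pm hm₀) (neg_pm hm₁) h₀' h₁'
        rcases hres.2 with ⟨hm, hτ⟩ | hρ
        · exact absurd ⟨neg_inj.mp hm, hτ⟩ hne
        · exact hρ
      · subst h
        exact absurd h₀ (hnofix τ₀ hτ₀ _ hx m₀)
      · have hres := hsep i hi j h j h m₀ m₁ τ₀ hτ₀ τ₁ hτ₁ hm₀ hm₁ h₀ h₁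
        rcases hres.2 with h' | hρ
        · exact absurd h' hne
        · exact hρ
    · rintro ⟨p, hp4, c, hcX, hcinj, hc0, hstep2⟩
      have hidx : ∀ i, ∃ k, i < p - 1 → k < n ∧ a k = c i := by
        intro i
        by_cases hi : i < p - 1
        · have hm : c i ∈ X := hcX i (by omega)
          rw [himg] at hm
          obtain ⟨k, hk, hak⟩ := hm
          exact ⟨k, fun _ => ⟨hk, hak⟩⟩
        · exact ⟨0, fun h => absurd h hi⟩
      choose idx hidxs using hidx
      obtain ⟨i, hi, hmax⟩ := Finset.exists_max_image (Finset.range (p - 1)) idx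
        ⟨0, Finset.mem_range.mpr (by omega)⟩
      rw [Finset.mem_range] at hi
      set prv := if i = 0 then p - 2 else i - 1 with hprv
      set nxt := if i = p - 2 then 0 else i + 1 with hnxt
      have hprv_lt : prv < p - 1 := by rw [hprv]; split <;> omega
      have hnxt_lt : nxt < p - 1 := by rw [hnxt]; split <;> omega
      have hprv_ne : prv ≠ i := by rw [hprv]; split <;> omega
      have hnxt_ne : nxt ≠ i := by rw [hnxt]; split <;> omega
      have hpn : prv ≠ nxt := by rw [hprv, hnxt]; split <;> split <;> omega
      have hcnxt : c (i + 1) = c nxt := by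
        rw [hnxt]; split
        · rename_i h
          rw [show i + 1 = p - 1 by omega, ← hc0]
        · rfl
      have hcprv : c (prv + 1) = c i := by
        rw [hprv]; split
        · rename_i h
          rw [show p - 2 + 1 = p - 1 by omega, ← hc0, h]
        · congr 1; omega
      obtain ⟨τn, hτn, mn, hmn, hEn⟩ := hstep2 i hi
      rw [hcnxt] at hEn
      obtain ⟨τp, hτp, mp, hmp, hEp⟩ := hstep2 prv hprv_lt
      rw [hcprv] at hEp
      have hEp' := appPow_symm' hEp
      have hki := hidxs i hi
      have hkp := hidxs prv hprv_lt
      have hkn := hidxs nxt hnxt_lt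
      have hlt_p : idx prv < idx i := by
        rcases lt_or_eq_of_le (hmax prv (Finset.mem_range.mpr hprv_lt)) with h | h
        · exact h
        · exact absurd (hcinj prv hprv_lt i hi (by rw [← hkp.2, ← hki.2, h])) hprv_ne
      have hlt_n : idx nxt < idx i := by
        rcases lt_or_eq_of_le (hmax nxt (Finset.mem_range.mpr hnxt_lt)) with h | h
        · exact h
        · exact absurd (hcinj nxt hnxt_lt i hi (by rw [← hkn.2, ← hki.2, h])) hnxt_ne
      have hres := hsep (idx i) hki.1 (idx prv) hlt_p (idx nxt) hlt_n (-mp) mn τp hτp τn hτn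
        (neg_pm hmp) hmn (by rw [hki.2, hkp.2]; exact hEp') (by rw [hki.2, hkn.2]; exact hEn)
      exact hpn (hcinj prv hprv_lt nxt hnxt_lt (by rw [← hkp.2, ← hkn.2, hres.1]))
  · rintro ⟨h1, h2⟩
    have hXfin : X.Finite := Set.Finite.subset T.elems.finite_toSet (fun x hx => (hX hx).1)
    set Sf := hXfin.toFinset with hSf
    have hSfX : (↑Sf : Set Ordinal) = X := hXfin.coe_toFinset
    set E : Ordinal → Ordinal → Prop := fun x y =>
      x ≠ y ∧ ∃ τ ∈ A, ∃ m : ℤ, (m = 1 ∨ m = -1) ∧ appPow (F τ) m x y with hE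
    have hirr : ∀ x, ¬ E x x := fun x h => h.1 rfl
    have hnc : ¬ ∃ p : ℕ, 4 ≤ p ∧ ∃ c : ℕ → Ordinal, (∀ i < p, c i ∈ Sf) ∧
        (∀ i < p - 1, ∀ j < p - 1, c i = c j → i = j) ∧ c 0 = c (p - 1) ∧
        (∀ i < p - 1, E (c i) (c (i + 1))) := by
      rintro ⟨p, hp, c, hc1, hc2, hc3, hc4⟩
      apply h2
      refine ⟨p, hp, c, fun i hi => hXfin.mem_toFinset.mp (hc1 i hi), hc2, hc3, fun i hi => ?_⟩
      obtain ⟨-, τ, hτ, m, hm, hPm⟩ := hc4 i hi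
      exact ⟨τ, hτ, m, hm, hPm⟩
    obtain ⟨n, a, hinj, himg, hord⟩ := order_exists E hirr Sf.card Sf le_rfl hnc
    refine ⟨n, a, hinj, by rw [← hSfX, himg], ?_⟩
    have haX : ∀ k, k < n → a k ∈ X := by
      intro k hk
      have hm : a k ∈ (↑Sf : Set Ordinal) := by rw [himg]; exact ⟨k, hk, rfl⟩
      rwa [hSfX] at hm
    intro i hi j₀ hj₀ j₁ hj₁ m₀ m₁ τ₀ hτ₀ τ₁ hτ₁ hm₀ hm₁ hA' hB'
    have hne0 : a i ≠ a j₀ := fun h => absurd (hinj i hi j₀ (by omega) h) (by omega)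
    have hne1 : a i ≠ a j₁ := fun h => absurd (hinj i hi j₁ (by omega) h) (by omega)
    have hE0 : E (a i) (a j₀) := ⟨hne0, τ₀, hτ₀, m₀, hm₀, hA'⟩
    have hE1 : E (a i) (a j₁) := ⟨hne1, τ₁, hτ₁, m₁, hm₁, hB'⟩
    have hjj : j₀ = j₁ := hord i hi j₀ hj₀ j₁ hj₁ hE0 hE1
    refine ⟨hjj, ?_⟩
    by_cases hsame : m₀ = m₁ ∧ τ₀ = τ₁
    · exact Or.inl hsame
    · refine Or.inr (h1 (a i) (haX i hi) (a j₀) (haX j₀ (by omega)) m₀ m₁ τ₀ hτ₀ τ₁ hτ₁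
        hm₀ hm₁ hA' ?_ hsame)
      rw [hjj]; exact hB'
end
end
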